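/- arXiv:1407.0940 — 2 statements merged into one kernel-verified Lean document; each statement's English description precedes it below -/
import Mathlib

section
/- For a subset A of ℕ that is not eventually periodic (and with 1 ∉ A), the graph G(A) is embedding rigid: the only graph embedding of G(A) into itself is the identity. Here G(A) has vertex set ℕ ∪ (A × {1}) and edges {n, n+1} (n ∈ ℕ) and {n, (n,1)} (n ∈ A). -/
/-- The vertex set of the graph `G(A)`: `ℕ ∪ (A × {1})`. -/
def GVert (A : Set ℕ) : Type := ℕ ⊕ {a : ℕ // a ∈ A}

/-- The graph `G(A)`, with edges `{n, n+1}` for `n ∈ ℕ` and `{n, (n,1)}` for `n ∈ A`. -/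
def GGraph (A : Set ℕ) : SimpleGraph (GVert A) :=
  SimpleGraph.fromRel (fun v w =>
    match v, w with
    | Sum.inl n, Sum.inl m => m = n + 1
    | Sum.inl n, Sum.inr a => a.1 = n
    | _, _ => False)

/-- `A ⊆ ℕ` is eventually periodic. -/
def EventuallyPeriodic (A : Set ℕ) : Prop :=
  ∃ N k : ℕ, 1 ≤ k ∧ ∀ n ≥ N, (n ∈ A ↔ n + k ∈ A)

section Aux

variable {A : Set ℕ}

lemma adj_inl_inl {n m : ℕ} :
    (GGraph A).Adj (Sum.inl n) (Sum.inl m) ↔ m = n + 1 ∨ n = m + 1 := by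
  simp only [GGraph, SimpleGraph.fromRel_adj, ne_eq]
  constructor
  · rintro ⟨-, h⟩; exact h
  · intro h
    refine ⟨fun e => ?_, h⟩
    have := Sum.inl.inj e
    omega

lemma adj_inr_iff {a : {a : ℕ // a ∈ A}} {v : GVert A} :
    (GGraph A).Adj v (Sum.inr a) ↔ v = Sum.inl a.1 := by
  cases v with
  | inl m =>
    simp only [GGraph, SimpleGraph.fromRel_adj, ne_eq]
    constructor
    · rintro ⟨-, h | h⟩
      · rw [h]
      · exact h.elim
    · rintro h
      have h' : a.1 = m := (Sum.inl.inj h).symm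
      exact ⟨fun e => Sum.inl_ne_inr e, Or.inl h'⟩
  | inr b =>
    simp only [GGraph, SimpleGraph.fromRel_adj, ne_eq]
    constructor
    · rintro ⟨-, h | h⟩ <;> exact h.elim
    · rintro h; exact absurd h (fun e => Sum.inr_ne_inl e)

lemma adj_inl_iff {k : ℕ} {v : GVert A} :
    (GGraph A).Adj v (Sum.inl k) ↔
      (∃ m, v = Sum.inl m ∧ (k = m + 1 ∨ m = k + 1)) ∨
      (∃ h : k ∈ A, v = Sum.inr ⟨k, h⟩) := by
  cases v with
  | inl m =>
    rw [show ((GGraph A).Adj (Sum.inl m) (Sum.inl k) : Prop) ↔ _ from adj_inl_inl]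
    constructor
    · rintro (h | h)
      · exact Or.inl ⟨m, rfl, Or.inl h⟩
      · exact Or.inl ⟨m, rfl, Or.inr h⟩
    · rintro (⟨m', hm', h⟩ | ⟨h, hv⟩)
      · have := Sum.inl.inj hm'; subst this
        rcases h with h | h
        · exact Or.inl h
        · exact Or.inr h
      · exact absurd hv (fun e => Sum.inl_ne_inr e)
  | inr a =>
    rw [show ((GGraph A).Adj (Sum.inr a) (Sum.inl k)) ↔ (Sum.inl k : ℕ ⊕ {a : ℕ // a ∈ A}) = Sum.inl a.1 from ⟨fun h => adj_inr_iff.mp h.symm, fun h => (adj_inr_iff.mpr h).symm⟩]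
    constructor
    · rintro h
      have h' : k = a.1 := Sum.inl.inj h
      subst h'
      exact Or.inr ⟨a.2, rfl⟩
    · rintro (⟨m, hm, -⟩ | ⟨h, hv⟩)
      · exact absurd hm (fun e => Sum.inr_ne_inl e)
      · have := Sum.inr.inj hv
        rw [this]

lemma shift_up_periodic (A : Set ℕ) (d M : ℕ) (hd : 1 ≤ d)
    (h : ∀ n, M ≤ n → n ∈ A → n + d ∈ A) : EventuallyPeriodic A := by
  have hiter : ∀ n, M ≤ n → n ∈ A → ∀ j, n + j * d ∈ A := by
    intro n hn hA j
    induction j with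
    | zero => simpa using hA
    | succ j ih =>
      have : n + (j + 1) * d = (n + j * d) + d := by ring
      rw [this]
      exact h _ (by omega) ih
  set E : Set ℕ := {n : ℕ | M ≤ n ∧ n ∉ A ∧ n + d ∈ A} with hE
  have hkey : ∀ a ∈ E, ∀ b ∈ E, a % d = b % d → a = b := by
    have main : ∀ a ∈ E, ∀ b ∈ E, a < b → a % d = b % d → False := by
      rintro a ⟨haM, haA, haA'⟩ b ⟨hbM, hbA, hbA'⟩ hab hmod
      have hdvd : d ∣ b - a := (Nat.modEq_iff_dvd' (le_of_lt hab)).mp hmod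
      obtain ⟨q, hq⟩ := hdvd
      have hq1 : 1 ≤ q := by
        rcases Nat.eq_zero_or_pos q with rfl | h0
        · simp at hq; omega
        · exact h0
      obtain ⟨q', rfl⟩ : ∃ q', q = q' + 1 := ⟨q - 1, by omega⟩
      have := hiter (a + d) (by omega) haA' q'
      have heq : a + d + q' * d = b := by
        have : d * (q' + 1) = d * q' + d := by ring
        rw [this] at hq
        have h2 : q' * d = d * q' := by ring
        omega
      rw [heq] at this
      exact hbA this
    intro a ha b hb hmod
    rcases Nat.lt_trichotomy a b with hlt | heq | hgt
    · exact absurd hmod (fun hm => main a ha b hb hlt hm)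
    · exact heq
    · exact absurd hmod (fun hm => main b hb a ha hgt hm.symm)
  have hEfin : E.Finite := by
    apply Set.Finite.of_finite_image (f := (· % d))
    · exact (Set.finite_Iio d).subset (by
        rintro x ⟨y, hy, rfl⟩
        exact Nat.mod_lt _ (by omega))
    · intro a ha b hb hab
      exact hkey a ha b hb hab
  obtain ⟨C, hC⟩ := hEfin.bddAbove
  refine ⟨max M (C + 1), d, hd, ?_⟩
  intro n hn
  constructor
  · exact h n (by omega)
  · intro hnd
    by_contra hnA
    have hnE : n ∈ E := ⟨by omega, hnA, hnd⟩
    have := hC hnE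
    omega

end Aux

/-- If `1 ∉ A` and `A` is not eventually periodic, then `G(A)` is embedding rigid:
the only graph embedding of `G(A)` into itself is the identity. -/
theorem GGraph_embedding_rigid (A : Set ℕ) (hA : 1 ∉ A) (hper : ¬ EventuallyPeriodic A) :
    ∀ f : GVert A → GVert A, Function.Injective f →
      (∀ x y, (GGraph A).Adj x y ↔ (GGraph A).Adj (f x) (f y)) → f = id := by
  intro f hinj hadj
  -- the image of the ray, as a function to ℕ (junk value on leaves)
  set h : ℕ → ℕ := fun n => Sum.elim id (fun _ => 0) (f (Sum.inl n)) with h_def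
  -- every positive vertex maps into the ray
  have key : ∀ n, 1 ≤ n → f (Sum.inl n) = Sum.inl (h n) := by
    intro n hn
    obtain ⟨m, rfl⟩ : ∃ m, n = m + 1 := ⟨n - 1, by omega⟩
    have h1 : (GGraph A).Adj (f (Sum.inl m)) (f (Sum.inl (m + 1))) :=
      (hadj _ _).mp (adj_inl_inl.mpr (Or.inl rfl))
    have h2 : (GGraph A).Adj (f (Sum.inl (m + 2))) (f (Sum.inl (m + 1))) :=
      (hadj _ _).mp (adj_inl_inl.mpr (Or.inr rfl))
    cases hfm : f (Sum.inl (m + 1)) with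
    | inl k => simp [h_def, hfm]; rfl
    | inr a =>
      rw [hfm] at h1 h2
      have e1 := adj_inr_iff.mp h1
      have e2 := adj_inr_iff.mp h2
      have := hinj (e1.trans e2.symm)
      have := Sum.inl.inj this
      omega
  have hinjh : ∀ n m, 1 ≤ n → 1 ≤ m → h n = h m → n = m := by
    intro n m hn hm hnm
    have : f (Sum.inl n) = f (Sum.inl m) := by rw [key n hn, key m hm, hnm]
    exact Sum.inl.inj (hinj this)
  have step : ∀ n, 1 ≤ n → h (n + 1) = h n + 1 ∨ h n = h (n + 1) + 1 := by
    intro n hn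
    have := (hadj (Sum.inl n) (Sum.inl (n + 1))).mp (adj_inl_inl.mpr (Or.inl rfl))
    rw [key n hn, key (n + 1) (by omega)] at this
    exact adj_inl_inl.mp this
  -- there is an up-step
  obtain ⟨N, hN1, hNup⟩ : ∃ n, 1 ≤ n ∧ h (n + 1) = h n + 1 := by
    by_contra hc
    push_neg at hc
    have hdown : ∀ n, 1 ≤ n → h n = h (n + 1) + 1 :=
      fun n hn => (step n hn).resolve_left (hc n hn)
    have hdesc : ∀ m, h 1 = h (1 + m) + m := by
      intro m
      induction m with
      | zero => simp
      | succ m ih =>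
        have := hdown (1 + m) (by omega)
        have e : 1 + (m + 1) = (1 + m) + 1 := by omega
        rw [e]
        omega
    have := hdesc (h 1 + 1)
    omega
  -- after the up-step, strictly increasing
  have upAll : ∀ m, h (N + m) = h N + m := by
    have Q : ∀ m, h (N + m) = h N + m ∧ h (N + m + 1) = h N + m + 1 := by
      intro m
      induction m with
      | zero => exact ⟨by simp, hNup⟩
      | succ m ih =>
        refine ⟨by rw [show N + (m + 1) = N + m + 1 by omega]; exact ih.2, ?_⟩
        rcases step (N + m + 1) (by omega) with hs | hs
        · rw [show N + (m + 1) + 1 = N + m + 1 + 1 by omega, hs, ih.2]; omega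
        · exfalso
          have : h (N + m + 1 + 1) = h N + m := by omega
          have e := hinjh (N + m + 1 + 1) (N + m) (by omega) (by omega)
            (by rw [this, ih.1])
          omega
    exact fun m => (Q m).1
  -- leaves transfer membership
  have transfer : ∀ n, N + 1 ≤ n → n ∈ A → h n ∈ A := by
    intro n hn hnA
    have hfa : (GGraph A).Adj (f (Sum.inr ⟨n, hnA⟩)) (f (Sum.inl n)) :=
      (hadj _ _).mp ((adj_inl_iff (k := n)).mpr (Or.inr ⟨hnA, rfl⟩))
    rw [key n (by omega)] at hfa
    obtain ⟨j, rfl⟩ : ∃ j, n = N + 1 + j := ⟨n - N - 1, by omega⟩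
    rcases adj_inl_iff.mp hfa with ⟨m, hvm, hm⟩ | ⟨hk, hv⟩
    · exfalso
      have e0 : h (N + 1 + j) = h N + (1 + j) := by
        rw [show N + 1 + j = N + (1 + j) by omega]; exact upAll (1 + j)
      rcases hm with hm | hm
      · -- m = h n - 1 = h (N + j)
        have em : m = h (N + j) := by rw [upAll j]; omega
        have : f (Sum.inr ⟨N + 1 + j, hnA⟩) = f (Sum.inl (N + j)) := by
          rw [hvm, em, key (N + j) (by omega)]
        exact Sum.inr_ne_inl (hinj this)
      · -- m = h n + 1 = h (N + j + 2)
        have em : m = h (N + (j + 2)) := by rw [upAll (j + 2)]; omega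
        have : f (Sum.inr ⟨N + 1 + j, hnA⟩) = f (Sum.inl (N + (j + 2))) := by
          rw [hvm, em, key (N + (j + 2)) (by omega)]
        exact Sum.inr_ne_inl (hinj this)
    · rw [hv] at hfa
      exact hk
  rcases Nat.lt_trichotomy (h N) N with hlt | heq | hgt
  · -- h N < N: downward shift, Aᶜ is upward closed along d
    exfalso
    set d := N - h N with hd_def
    have hdown : ∀ m, h N + 1 ≤ m → m + d ∈ A → m ∈ A := by
      intro m hm hmA
      have hn : N + 1 ≤ m + d := by omega
      have := transfer (m + d) hn hmA
      have e : h (m + d) = m := by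
        rw [show m + d = N + (m + d - N) by omega, upAll]; omega
      rwa [e] at this
    have hupc : ∀ n, h N + 1 ≤ n → n ∈ Aᶜ → n + d ∈ Aᶜ :=
      fun n hn hc hmem => hc (hdown n hn hmem)
    obtain ⟨N', k, hk, hp⟩ := shift_up_periodic Aᶜ d (h N + 1) (by omega) hupc
    refine hper ⟨N', k, hk, fun n hn => ?_⟩
    have := hp n hn
    simp only [Set.mem_compl_iff] at this
    tauto
  · -- h N = N: f is the identity
    have hid : ∀ n, 1 ≤ n → h n = n := by
      have down : ∀ j, ∀ m, 1 ≤ m → N ≤ m + j → h m = m := by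
        intro j
        induction j with
        | zero =>
          intro m h1 h2
          obtain ⟨t, rfl⟩ : ∃ t, m = N + t := ⟨m - N, by omega⟩
          rw [upAll t, heq]
        | succ j IH =>
          intro m h1 h2
          by_cases hc : N ≤ m + j
          · exact IH m h1 hc
          · have e1 : h (m + 1) = m + 1 := IH (m + 1) (by omega) (by omega)
            have e2 : h (m + 2) = m + 2 := IH (m + 2) (by omega) (by omega)
            rcases step m h1 with hs | hs
            · omega
            · exfalso
              have := hinjh m (m + 2) h1 (by omega) (by omega)
              omega
      exact fun n hn => down N n hn (by omega)
    have keyid : ∀ n, 1 ≤ n → f (Sum.inl n) = Sum.inl n := by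
      intro n hn; rw [key n hn, hid n hn]
    have f0 : f (Sum.inl 0) = Sum.inl 0 := by
      have hadj01 : (GGraph A).Adj (f (Sum.inl 0)) (Sum.inl 1) := by
        have := (hadj (Sum.inl 0) (Sum.inl 1)).mp (adj_inl_inl.mpr (Or.inl rfl))
        rwa [keyid 1 (by omega)] at this
      rcases adj_inl_iff.mp hadj01 with ⟨m, hv, hm⟩ | ⟨h1A, hv⟩
      · rcases hm with hm | hm
        · rw [hv]; congr 1; omega
        · exfalso
          subst hm
          have : f (Sum.inl 0) = f (Sum.inl 2) := by rw [hv, keyid 2 (by omega)]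
          have := Sum.inl.inj (hinj this)
          omega
      · exact absurd h1A hA
    have fin : ∀ n, f (Sum.inl n) = Sum.inl n := by
      intro n
      cases n with
      | zero => exact f0
      | succ n => exact keyid (n + 1) (by omega)
    have fr : ∀ a : {a : ℕ // a ∈ A}, f (Sum.inr a) = Sum.inr a := by
      intro a
      have hfa : (GGraph A).Adj (f (Sum.inr a)) (Sum.inl a.1) := by
        have := (hadj (Sum.inr a) (Sum.inl a.1)).mp
          ((adj_inl_iff (k := a.1)).mpr (Or.inr ⟨a.2, rfl⟩))
        rwa [fin a.1] at this
      rcases adj_inl_iff.mp hfa with ⟨m, hv, hm⟩ | ⟨hk, hv⟩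
      · exfalso
        have : f (Sum.inr a) = f (Sum.inl m) := by rw [hv, fin m]
        exact Sum.inr_ne_inl (hinj this)
      · rw [hv]
    funext x
    cases x with
    | inl n => exact fin n
    | inr a => exact fr a
  · -- h N > N: upward shift
    exfalso
    set d := h N - N with hd_def
    have hup : ∀ n, N + 1 ≤ n → n ∈ A → n + d ∈ A := by
      intro n hn hnA
      have := transfer n hn hnA
      have e : h n = n + d := by
        rw [show n = N + (n - N) by omega, upAll]; omega
      rwa [e] at this
    exact hper (shift_up_periodic A d (N + 1) (by omega) hup)
end

section
/- Let A, A' ⊆ ℕ. The graph G(A) restricted to the complement of some finite vertex set embeds into G(A') if and only if there exists an integer k such that (A + k) ∩ ℕ is almost included in A' (i.e., (A + k) \ A' is finite). -/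
lemma adj_ll (A : Set ℕ) (n m : ℕ) :
    (GGraph A).Adj (Sum.inl n) (Sum.inl m) ↔ m = n + 1 ∨ n = m + 1 := by
  simp only [GGraph, SimpleGraph.fromRel_adj]
  constructor
  · rintro ⟨h, h2⟩; exact h2
  · rintro (h|h) <;> subst h <;> exact ⟨(fun h => by cases h), by tauto⟩

lemma adj_lr (A : Set ℕ) (n : ℕ) (a : {a : ℕ // a ∈ A}) :
    (GGraph A).Adj (Sum.inl n) (Sum.inr a) ↔ a.1 = n := by
  simp only [GGraph, SimpleGraph.fromRel_adj]
  constructor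
  · rintro ⟨h, h2|h2⟩ <;> [exact h2; exact h2.elim]
  · rintro h; exact ⟨(fun h => by cases h), Or.inl h⟩

lemma adj_rl (A : Set ℕ) (n : ℕ) (a : {a : ℕ // a ∈ A}) :
    (GGraph A).Adj (Sum.inr a) (Sum.inl n) ↔ a.1 = n :=
  ⟨fun h => (adj_lr A n a).mp h.symm, fun h => ((adj_lr A n a).mpr h).symm⟩

lemma adj_rr (A : Set ℕ) (a b : {a : ℕ // a ∈ A}) :
    ¬ (GGraph A).Adj (Sum.inr a) (Sum.inr b) := by
  simp only [GGraph, SimpleGraph.fromRel_adj]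
  rintro ⟨h, h2|h2⟩ <;> exact h2

lemma easy_dir (A A' : Set ℕ) (k : ℤ)
    (hfin : {m : ℕ | (∃ a ∈ A, (a : ℤ) + k = (m : ℤ)) ∧ m ∉ A'}.Finite) :
    ∃ F : Set (GVert A), F.Finite ∧
      ∃ f : {v : GVert A // v ∉ F} → GVert A', Function.Injective f ∧
        ∀ x y : {v : GVert A // v ∉ F},
          (GGraph A).Adj x.1 y.1 ↔ (GGraph A').Adj (f x) (f y) := by
  classical
  obtain ⟨B, hB⟩ := hfin.bddAbove
  obtain ⟨N, hN0, hNB⟩ : ∃ N : ℕ, 0 ≤ (N:ℤ) + k ∧ (B:ℤ) < (N:ℤ) + k :=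
    ⟨((B:ℤ) + 1 - k).toNat + (-k).toNat, by push_cast; omega, by push_cast; omega⟩
  have key : ∀ a : ℕ, a ∈ A → N ≤ a → ((a:ℤ)+k).toNat ∈ A' := by
    intro a ha hNa
    by_contra hmem
    have : ((a:ℤ)+k).toNat ∈ {m : ℕ | (∃ a ∈ A, (a : ℤ) + k = (m : ℤ)) ∧ m ∉ A'} := by
      refine ⟨⟨a, ha, ?_⟩, hmem⟩
      have : (N:ℤ) ≤ a := by exact_mod_cast hNa
      omega
    have hle := hB this
    have : (N:ℤ) ≤ a := by exact_mod_cast hNa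
    have : (((a:ℤ)+k).toNat : ℤ) ≤ B := by exact_mod_cast hle
    omega
  refine ⟨Sum.inl '' Set.Iio N ∪ Sum.inr '' {a : {a : ℕ // a ∈ A} | a.1 < N}, ?_, ?_⟩
  · apply Set.Finite.union
    · exact (Set.finite_Iio N).image _
    · apply Set.Finite.image
      have : {a : {a : ℕ // a ∈ A} | a.1 < N} = Subtype.val ⁻¹' Set.Iio N := rfl
      rw [this]
      exact (Set.finite_Iio N).preimage Subtype.val_injective.injOn
  set F : Set (GVert A) := Sum.inl '' Set.Iio N ∪ Sum.inr '' {a : {a : ℕ // a ∈ A} | a.1 < N}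
    with hFdef
  have hl : ∀ n : ℕ, (Sum.inl n : GVert A) ∉ F → N ≤ n := by
    intro n hn
    by_contra h
    exact hn (Or.inl ⟨n, Set.mem_Iio.mpr (by omega), rfl⟩)
  have hr : ∀ a : {a : ℕ // a ∈ A}, (Sum.inr a : GVert A) ∉ F → N ≤ a.1 := by
    intro a ha
    by_contra h
    exact ha (Or.inr ⟨a, show a.1 < N by omega, rfl⟩)
  set f0 : GVert A → GVert A' := fun v => match v with
    | Sum.inl n => Sum.inl ((n:ℤ)+k).toNat
    | Sum.inr a => if h : ((a.1:ℤ)+k).toNat ∈ A' then Sum.inr ⟨_, h⟩ else Sum.inl 0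
    with hf0def
  have hfl : ∀ n : ℕ, f0 (Sum.inl n) = Sum.inl ((n:ℤ)+k).toNat := fun _ => rfl
  have hfr : ∀ (a : {a : ℕ // a ∈ A}) (hNa : N ≤ a.1),
      f0 (Sum.inr a) = Sum.inr ⟨((a.1:ℤ)+k).toNat, key a.1 a.2 hNa⟩ := by
    intro a hNa
    simp only [hf0def]
    exact dif_pos (key a.1 a.2 hNa)
  refine ⟨fun v => f0 v.1, ?_, ?_⟩
  · rintro ⟨v, hv⟩ ⟨w, hw⟩ h
    dsimp only at h
    rcases v with n | a <;> rcases w with n' | a'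
    · have hn := hl n hv; have hn' := hl n' hw
      rw [hfl, hfl] at h
      injection h with h
      have : n = n' := by
        have c1 : (N:ℤ) ≤ n := by exact_mod_cast hn
        have c2 : (N:ℤ) ≤ n' := by exact_mod_cast hn'
        omega
      subst this; rfl
    · rw [hfl, hfr a' (hr a' hw)] at h; cases h
    · rw [hfl, hfr a (hr a hv)] at h; cases h
    · have hn := hr a hv; have hn' := hr a' hw
      rw [hfr a hn, hfr a' hn'] at h
      injection h with h
      have h2 : ((a.1:ℤ)+k).toNat = ((a'.1:ℤ)+k).toNat := congrArg Subtype.val h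
      have : a.1 = a'.1 := by
        have c1 : (N:ℤ) ≤ a.1 := by exact_mod_cast hn
        have c2 : (N:ℤ) ≤ a'.1 := by exact_mod_cast hn'
        omega
      have : a = a' := Subtype.ext this
      subst this; rfl
  · rintro ⟨v, hv⟩ ⟨w, hw⟩
    simp only
    rcases v with n | a <;> rcases w with n' | a'
    · have hn := hl n hv; have hn' := hl n' hw
      rw [hfl, hfl, adj_ll, adj_ll]
      have c1 : (N:ℤ) ≤ n := by exact_mod_cast hn
      have c2 : (N:ℤ) ≤ n' := by exact_mod_cast hn'
      omega
    · have hn := hl n hv; have hn' := hr a' hw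
      rw [hfl, hfr a' hn', adj_lr, adj_lr]
      have c1 : (N:ℤ) ≤ n := by exact_mod_cast hn
      have c2 : (N:ℤ) ≤ a'.1 := by exact_mod_cast hn'
      constructor
      · intro h; simp only; omega
      · intro h; simp only at h; omega
    · have hn := hr a hv; have hn' := hl n' hw
      rw [hfl, hfr a hn,
        adj_rl, adj_rl]
      have c1 : (N:ℤ) ≤ a.1 := by exact_mod_cast hn
      have c2 : (N:ℤ) ≤ n' := by exact_mod_cast hn'
      constructor
      · intro h; simp only; omega
      · intro h; simp only at h; omega
    · have hn := hr a hv; have hn' := hr a' hw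
      rw [hfr a hn, hfr a' hn']
      constructor
      · intro h; exact ((adj_rr A a a') h).elim
      · intro h; exact ((adj_rr A' _ _) h).elim

lemma hard_dir (A A' : Set ℕ) (F : Set (GVert A)) (hF : F.Finite)
    (f : {v : GVert A // v ∉ F} → GVert A') (hinj : Function.Injective f)
    (hadj : ∀ x y : {v : GVert A // v ∉ F},
          (GGraph A).Adj x.1 y.1 ↔ (GGraph A').Adj (f x) (f y)) :
    ∃ k : ℤ, {m : ℕ | (∃ a ∈ A, (a : ℤ) + k = (m : ℤ)) ∧ m ∉ A'}.Finite := by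
  classical
  -- bound on the finite forbidden set
  set rank : GVert A → ℕ := Sum.elim id Subtype.val with hrank
  obtain ⟨N0, hN0⟩ := (hF.image rank).bddAbove
  set N : ℕ := N0 + 1 with hNdef
  have hlF : ∀ n : ℕ, N ≤ n → (Sum.inl n : GVert A) ∉ F := by
    intro n hn hmem
    have := hN0 (Set.mem_image_of_mem rank hmem)
    simp only [hrank, Sum.elim_inl, id_eq] at this
    omega
  have hrF : ∀ a : {a : ℕ // a ∈ A}, N ≤ a.1 → (Sum.inr a : GVert A) ∉ F := by
    intro a ha hmem
    have := hN0 (Set.mem_image_of_mem rank hmem)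
    simp only [hrank, Sum.elim_inr] at this
    omega
  -- the ray
  set g : ℕ → GVert A' := fun n => f ⟨Sum.inl (N + n), hlF _ (by omega)⟩ with hgdef
  have ginj : Function.Injective g := by
    intro i j h
    have := hinj h
    have : Sum.inl (N + i) = (Sum.inl (N + j) : GVert A) := congrArg Subtype.val this
    injection this with h2
    omega
  have gadj : ∀ n : ℕ, (GGraph A').Adj (g n) (g (n + 1)) := by
    intro n
    have hx : (GGraph A).Adj (Sum.inl (N + n)) (Sum.inl (N + (n + 1))) := by
      rw [adj_ll]; left; omega
    exact (hadj _ _).mp hx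
  -- the ray lands in the spine
  have hm : ∀ n : ℕ, ∃ p : ℕ, g (n + 1) = Sum.inl p := by
    intro n
    rcases hg : g (n + 1) with p | b
    · exact ⟨p, rfl⟩
    · exfalso
      have h1 : (GGraph A').Adj (g n) (Sum.inr b) := hg ▸ gadj n
      have h2 : (GGraph A').Adj (Sum.inr b) (g (n + 2)) := by
        have := gadj (n + 1)
        rwa [hg] at this
      have e1 : g n = Sum.inl b.1 := by
        rcases hgn : g n with q | c
        · rw [hgn] at h1
          rw [adj_lr] at h1
          rw [h1]
        · rw [hgn] at h1
          exact (adj_rr A' c b h1).elim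
      have e2 : g (n + 2) = Sum.inl b.1 := by
        rcases hgn : g (n + 2) with q | c
        · rw [hgn] at h2
          rw [adj_rl] at h2
          rw [h2]
        · rw [hgn] at h2
          exact (adj_rr A' b c h2).elim
      have := ginj (e1.trans e2.symm)
      omega
  choose m hmeq using hm
  have minj : Function.Injective m := by
    intro i j h
    have : g (i + 1) = g (j + 1) := by rw [hmeq, hmeq, h]
    have := ginj this
    omega
  have mstep : ∀ n : ℕ, m (n + 1) = m n + 1 ∨ m n = m (n + 1) + 1 := by
    intro n
    have := gadj (n + 1)
    rw [hmeq n, show n + 1 + 1 = (n + 1) + 1 from rfl, hmeq (n + 1), adj_ll] at this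
    exact this
  -- monotone analysis
  have up : ∀ n : ℕ, m (n + 1) = m n + 1 → m (n + 2) = m (n + 1) + 1 := by
    intro n h
    have h2' : m (n + 2) = m (n + 1) + 1 ∨ m (n + 1) = m (n + 2) + 1 := mstep (n + 1)
    rcases h2' with h2 | h2
    · exact h2
    · exfalso
      have : m (n + 2) = m n := by omega
      have := minj this
      omega
  have down : ∀ n : ℕ, m n = m (n + 1) + 1 → m (n + 1) = m (n + 2) + 1 := by
    intro n h
    have h2' : m (n + 2) = m (n + 1) + 1 ∨ m (n + 1) = m (n + 2) + 1 := mstep (n + 1)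
    rcases h2' with h2 | h2
    · exfalso
      have : m (n + 2) = m n := by omega
      have := minj this
      omega
    · exact h2
  have hup0 : m 1 = m 0 + 1 := by
    rcases mstep 0 with h | h
    · exact h
    · exfalso
      have alldown : ∀ n : ℕ, m n = m (n + 1) + 1 := by
        intro n
        induction n with
        | zero => exact h
        | succ p ih => exact down p ih
      have hdec : ∀ n : ℕ, m n + n = m 0 := by
        intro n
        induction n with
        | zero => rfl
        | succ p ih =>
          have := alldown p
          omega
      have := hdec (m 0 + 1)
      omega
  have allup : ∀ n : ℕ, m (n + 1) = m n + 1 := by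
    intro n
    induction n with
    | zero => exact hup0
    | succ p ih => exact up p ih
  have hlin : ∀ n : ℕ, m n = m 0 + n := by
    intro n
    induction n with
    | zero => rfl
    | succ p ih =>
      have := allup p
      omega
  have hgl : ∀ n : ℕ, g (n + 1) = Sum.inl (m 0 + n) := by
    intro n
    rw [hmeq n, hlin n]
  -- the translation constant
  refine ⟨(m 0 : ℤ) - (N + 1), ?_⟩
  have key : ∀ a : ℕ, a ∈ A → N + 2 ≤ a → m 0 + (a - (N + 1)) ∈ A' := by
    intro a ha hNa
    set d : ℕ := a - (N + 1) with hddef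
    have hd1 : 1 ≤ d := by omega
    have hvr : (Sum.inr ⟨a, ha⟩ : GVert A) ∉ F := hrF ⟨a, ha⟩ (show N ≤ a by omega)
    have hvl : (Sum.inl a : GVert A) ∉ F := hlF a (by omega)
    have hAdjA : (GGraph A).Adj (Sum.inl a) (Sum.inr ⟨a, ha⟩) := (adj_lr A a ⟨a, ha⟩).mpr rfl
    have hAdjA' : (GGraph A').Adj (f ⟨Sum.inl a, hvl⟩) (f ⟨Sum.inr ⟨a, ha⟩, hvr⟩) :=
      (hadj ⟨Sum.inl a, hvl⟩ ⟨Sum.inr ⟨a, ha⟩, hvr⟩).mp hAdjA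
    have hfy : f ⟨Sum.inl a, hvl⟩ = Sum.inl (m 0 + d) := by
      have e : (⟨Sum.inl a, hvl⟩ : {v : GVert A // v ∉ F}) =
          ⟨Sum.inl (N + (d + 1)), hlF _ (by omega)⟩ := by
        apply Subtype.ext
        show Sum.inl a = (Sum.inl (N + (d + 1)) : GVert A)
        congr 1
        omega
      rw [e]
      exact hgl d
    rw [hfy] at hAdjA'
    rcases hfx : f ⟨Sum.inr ⟨a, ha⟩, hvr⟩ with p | b
    · exfalso
      rw [hfx] at hAdjA'
      rw [adj_ll] at hAdjA'
      rcases hAdjA' with h | h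
      · -- p = m 0 + d + 1, so f(inr a) = g (d + 2) = f (inl (N + d + 2))
        have : f ⟨Sum.inr ⟨a, ha⟩, hvr⟩ = g (d + 2) := by
          rw [hfx, hgl (d + 1)]
          exact congrArg Sum.inl (by omega)
        have := hinj this
        have : (Sum.inr ⟨a, ha⟩ : GVert A) = Sum.inl (N + (d + 2)) := congrArg Subtype.val this
        cases this
      · -- m 0 + d = p + 1, so p = m 0 + (d - 1)
        have : f ⟨Sum.inr ⟨a, ha⟩, hvr⟩ = g d := by
          rw [hfx]
          have e2 : d = (d - 1) + 1 := by omega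
          rw [e2, hgl (d - 1)]
          congr 1
          omega
        have := hinj this
        have : (Sum.inr ⟨a, ha⟩ : GVert A) = Sum.inl (N + d) := congrArg Subtype.val this
        cases this
    · rw [hfx] at hAdjA'
      rw [adj_lr] at hAdjA'
      rw [← hAdjA']
      exact b.2
  -- conclude finiteness
  apply Set.Finite.subset (Set.finite_Iio ((N : ℤ) + 2 + ((m 0 : ℤ) - (N + 1))).toNat)
  rintro p ⟨⟨a, ha, hak⟩, hp⟩
  simp only [Set.mem_Iio]
  by_cases hcase : N + 2 ≤ a
  · exfalso
    have hmem := key a ha hcase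
    have : p = m 0 + (a - (N + 1)) := by omega
    rw [this] at hp
    exact hp hmem
  · omega

/-- `G(A)` restricted to the complement of some finite vertex set embeds into `G(A')`
if and only if some integer translate of `A` is almost included in `A'`. -/
theorem GGraph_almost_embeds_iff (A A' : Set ℕ) :
    (∃ F : Set (GVert A), F.Finite ∧
      ∃ f : {v : GVert A // v ∉ F} → GVert A', Function.Injective f ∧
        ∀ x y : {v : GVert A // v ∉ F},
          (GGraph A).Adj x.1 y.1 ↔ (GGraph A').Adj (f x) (f y)) ↔
    (∃ k : ℤ, {m : ℕ | (∃ a ∈ A, (a : ℤ) + k = (m : ℤ)) ∧ m ∉ A'}.Finite) := by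
  constructor
  · rintro ⟨F, hF, f, hinj, hadj⟩
    exact hard_dir A A' F hF f hinj hadj
  · rintro ⟨k, hfin⟩
    exact easy_dir A A' k hfin
end
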